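/- Let W : Y² − XY + Y = X³ be the elliptic curve 14A4 over ℚ, let P = (0,0) and Q = (−1,−1) (points of order 3 and 2 respectively), and let p = −(P + Q) = (1, 1), a point of order 6. Then: (a) the slope of the chord through p and 2p equals the slope of the tangent line to W at 4p; (b) the slope of the chord through 3p and 4p equals the slope of the tangent line to W at 2p. (Here the slope through distinct affine points u ≠ v with x(u) ≠ x(v) is (y(v) − y(u))/(x(v) − x(u)), and the tangent slope at a point (x₀,y₀) of W is the slope of the tangent line to the plane curve Y² − XY + Y = X³ there; all these lines are non-vertical.) -/

import Mathlib

/-- The elliptic curve `14A4 : Y² - XY + Y = X³` over `ℚ` (the Deuring curve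
`D(-1,1)`). -/
def W14A4 : WeierstrassCurve.Affine ℚ := ⟨-1, 0, 1, 0, 0⟩

/-- The `x`-coordinate of a nonsingular affine point (junk value `0` at infinity). -/
noncomputable def ptx {F : Type*} [Field F] {W : WeierstrassCurve.Affine F} : W.Point → F
  | .zero => 0
  | .some x _ _ => x

/-- The `y`-coordinate of a nonsingular affine point (junk value `0` at infinity). -/
noncomputable def pty {F : Type*} [Field F] {W : WeierstrassCurve.Affine F} : W.Point → F
  | .zero => 0
  | .some _ y _ => y

/-!
The point `p = (1, 1)` has order 6, and its multiples are read off by chord-and-tangent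
arithmetic: `2p = P = (0, 0)`, `3p = Q = (-1, -1)`, `4p = 2P = -P = (0, -1)` and
`P + Q = (1, -1) = -p`. Then both lines in (a) have slope `1` and both lines in (b) have
slope `0`.
-/

namespace WeierstrassCurve.Affine.Point

variable {F : Type*} [Field F] [DecidableEq F] {W : WeierstrassCurve.Affine F}

lemma some_add_some_eq {x₁ y₁ x₂ y₂ x₃ y₃ : F} {h₁ : W.Nonsingular x₁ y₁}
    {h₂ : W.Nonsingular x₂ y₂} (h₃ : W.Nonsingular x₃ y₃)
    (hxy : ¬(x₁ = x₂ ∧ y₁ = W.negY x₂ y₂))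
    (hx : W.addX x₁ x₂ (W.slope x₁ x₂ y₁ y₂) = x₃)
    (hy : W.addY x₁ x₂ y₁ (W.slope x₁ x₂ y₁ y₂) = y₃) :
    some x₁ y₁ h₁ + some x₂ y₂ h₂ = some x₃ y₃ h₃ := by
  subst hx hy
  exact add_some hxy

end WeierstrassCurve.Affine.Point

open WeierstrassCurve.Affine

/-- On the curve `14A4 : Y² - XY + Y = X³` with `P = (0,0)`, `Q = (-1,-1)` and
`p = -(P + Q) = (1,1)`: (a) the chord through `p` and `2p` is parallel to the
tangent line at `4p`, and (b) the chord through `3p` and `4p` is parallel to the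
tangent line at `2p`.  Chord slopes are `(y(v) - y(u))/(x(v) - x(u))` and the
tangent slope of the plane curve `Y² - XY + Y = X³` at `(x₀, y₀)` is
`(3x₀² + y₀)/(2y₀ - x₀ + 1)`; all four lines are non-vertical. -/
theorem parallel_lines_14A4 (hP : W14A4.Nonsingular 0 0)
    (hQ : W14A4.Nonsingular (-1) (-1)) (hp : W14A4.Nonsingular 1 1) :
    letI P : W14A4.Point := WeierstrassCurve.Affine.Point.some _ _ hP
    letI Q : W14A4.Point := WeierstrassCurve.Affine.Point.some _ _ hQ
    letI p : W14A4.Point := WeierstrassCurve.Affine.Point.some _ _ hp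
    p = -(P + Q) ∧
    -- (a): the chord through `p`, `2p` and the tangent at `4p` are non-vertical
    -- and parallel
    (ptx ((2 : ℤ) • p) ≠ ptx p ∧
      2 * pty ((4 : ℤ) • p) - ptx ((4 : ℤ) • p) + 1 ≠ 0 ∧
      (pty ((2 : ℤ) • p) - pty p) / (ptx ((2 : ℤ) • p) - ptx p) =
        (3 * ptx ((4 : ℤ) • p) ^ 2 + pty ((4 : ℤ) • p)) /
          (2 * pty ((4 : ℤ) • p) - ptx ((4 : ℤ) • p) + 1)) ∧
    -- (b): the chord through `3p`, `4p` and the tangent at `2p` are non-vertical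
    -- and parallel
    (ptx ((4 : ℤ) • p) ≠ ptx ((3 : ℤ) • p) ∧
      2 * pty ((2 : ℤ) • p) - ptx ((2 : ℤ) • p) + 1 ≠ 0 ∧
      (pty ((4 : ℤ) • p) - pty ((3 : ℤ) • p)) / (ptx ((4 : ℤ) • p) - ptx ((3 : ℤ) • p)) =
        (3 * ptx ((2 : ℤ) • p) ^ 2 + pty ((2 : ℤ) • p)) /
          (2 * pty ((2 : ℤ) • p) - ptx ((2 : ℤ) • p) + 1)) := by
  set P : W14A4.Point := .some _ _ hP
  set Q : W14A4.Point := .some _ _ hQ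
  set p : W14A4.Point := .some _ _ hp
  obtain ⟨hpp, hPp, hPP, hPQ⟩ : p + p = P ∧ P + p = Q ∧ P + P = -P ∧ P + Q = -p := by
    refine ⟨Point.some_add_some_eq hP ?_ ?_ ?_, Point.some_add_some_eq hQ ?_ ?_ ?_,
      Point.some_add_some_eq ((nonsingular_neg ..).mpr hP) ?_ ?_ ?_,
      Point.some_add_some_eq ((nonsingular_neg ..).mpr hp) ?_ ?_ ?_⟩ <;>
    norm_num [W14A4, WeierstrassCurve.Affine.slope, addX, addY, negAddY, negY]
  have h2 : (2 : ℤ) • p = P := by rw [two_zsmul, hpp]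
  have h3 : (3 : ℤ) • p = Q := by rw [show (3 : ℤ) = 2 + 1 by rfl, add_zsmul, one_zsmul, h2, hPp]
  have h4 : (4 : ℤ) • p = -P := by rw [show (4 : ℤ) = 2 + 2 by rfl, add_zsmul, h2, hPP]
  rw [h2, h3, h4]
  refine ⟨by rw [hPQ, neg_neg], ?_, ?_⟩ <;> norm_num [P, Q, p, ptx, pty, W14A4, negY]
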